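/- arXiv:1205.0735 — 3 statements merged into one kernel-verified Lean document; each statement's English description precedes it below -/
import Mathlib

section
/- Define integers N(n,k) for n, k ≥ 0 by N(0,0) = 1, N(0,k) = 0 for k ≥ 1, N(n,k) = 0 for k < 0, and the recurrence N(n+1,k) = (n+2k+1)·N(n,k) + (n−2k+3)·N(n,k−1). Let L be the operator sending a function f to the derivative of (sec·f), i.e. L(f)(x) = d/dx (sec(x)·f(x)). Then for every n ≥ 0 and every real x with cos(x) ≠ 0, the n-th iterate of L applied to tan satisfies L^n(tan)(x) = ∑_{k=0}^{⌊(n+1)/2⌋} N(n,k) · tan(x)^{n−2k+1} · sec(x)^{n+2k}. -/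
/-- The coefficients N(n,k): N(0,0)=1, N(0,k)=0 for k ≠ 0 (in particular k ≥ 1 and k < 0),
and N(n+1,k) = (n+2k+1)·N(n,k) + (n−2k+3)·N(n,k−1). -/
def N : ℕ → ℤ → ℤ
  | 0, k => if k = 0 then 1 else 0
  | n + 1, k => ((n : ℤ) + 2 * k + 1) * N n k + ((n : ℤ) - 2 * k + 3) * N n (k - 1)

/-- sec(x) = 1/cos(x). -/
noncomputable def sec (x : ℝ) : ℝ := (Real.cos x)⁻¹

/-- The operator L sending f to the derivative of sec·f. -/
noncomputable def L (f : ℝ → ℝ) : ℝ → ℝ := deriv (fun x => sec x * f x)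

/-!
Since `sec' = tan · sec` and `tan' = sec²`, the operator `L` sends a monomial `tan^a · sec^b` to
`a · tan^(a-1) · sec^(b+3) + (b+1) · tan^(a+1) · sec^(b+1)`. Applying this to the claimed expansion
of `L^[n] tan` and collecting monomials yields exactly the recurrence defining `N (n + 1)`.
The exponents `n + 1 - 2 * k` are truncated natural subtractions, which is harmless because
`N n k = 0` as soon as `n + 1 < 2 * k`.
-/

open Finset Filter Topology Real

lemma N_eq_zero_of_neg : ∀ (n : ℕ) {k : ℤ}, k < 0 → N n k = 0
  | 0, k, hk => by rw [N, if_neg hk.ne]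
  | n + 1, k, hk => by rw [N, N_eq_zero_of_neg n hk, N_eq_zero_of_neg n (by omega : k - 1 < 0)]; ring

lemma N_eq_zero_of_lt : ∀ (n : ℕ) {k : ℤ}, (n : ℤ) + 1 < 2 * k → N n k = 0
  | 0, k, hk => by rw [N, if_neg (by omega)]
  | n + 1, k, hk => by
    push_cast at hk
    rw [N, N_eq_zero_of_lt n (by omega : (n : ℤ) + 1 < 2 * k)]
    rcases lt_or_ge ((n : ℤ) + 1) (2 * (k - 1)) with h | h
    · rw [N_eq_zero_of_lt n h]; ring
    · rw [show (n : ℤ) - 2 * k + 3 = 0 by omega]; ring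

lemma sum_range_N_mul_of_le (n : ℕ) (f : ℕ → ℝ) {m : ℕ} (hm : (n + 1) / 2 + 1 ≤ m) :
    ∑ k ∈ range m, (N n k : ℝ) * f k = ∑ k ∈ range ((n + 1) / 2 + 1), (N n k : ℝ) * f k := by
  refine (sum_subset (range_subset_range.mpr hm) fun k _ hk => ?_).symm
  rw [N_eq_zero_of_lt n (by simp only [mem_range] at hk; omega), Int.cast_zero, zero_mul]

/-- The recurrence for `N`, transposed: the `N n (k - 1)` term is shifted to index `k + 1`. -/
lemma sum_range_N_succ_mul (n : ℕ) (f : ℕ → ℝ) :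
    ∑ k ∈ range (n + 3), (N (n + 1) k : ℝ) * f k =
      ∑ k ∈ range (n + 2), (N n k : ℝ) *
        ((n + 2 * k + 1) * f k + (n - 2 * k + 1) * f (k + 1)) := by
  have hrec : ∀ k : ℕ, (N (n + 1) k : ℝ) * f k =
      (n + 2 * k + 1) * N n k * f k + (n - 2 * k + 3) * N n ((k : ℤ) - 1) * f k := by
    intro k; rw [N]; push_cast; ring
  have hlast : N n (n + 2 : ℕ) = 0 := N_eq_zero_of_lt n (by push_cast; omega)
  have hfirst : N n ((0 : ℕ) - 1) = 0 := N_eq_zero_of_neg n (by omega)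
  rw [sum_congr rfl fun k _ => hrec k, sum_add_distrib, sum_range_succ, sum_range_succ' _ (n + 2),
    hlast, hfirst]
  simp only [Int.cast_zero, mul_zero, zero_mul, add_zero]
  rw [← sum_add_distrib]
  refine sum_congr rfl fun k _ => ?_
  push_cast
  rw [add_sub_cancel_right]
  ring

lemma hasDerivAt_sec {x : ℝ} (hx : cos x ≠ 0) : HasDerivAt sec (tan x * sec x) x := by
  refine ((hasDerivAt_cos x).inv hx).congr_deriv ?_
  rw [tan_eq_sin_div_cos, sec]
  field_simp

lemma hasDerivAt_tan_sec_sq {x : ℝ} (hx : cos x ≠ 0) : HasDerivAt tan (sec x ^ 2) x := by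
  simpa [sec, one_div, ← inv_pow] using hasDerivAt_tan hx

lemma hasDerivAt_tan_pow_mul_sec_pow_succ {x : ℝ} (hx : cos x ≠ 0) (a b : ℕ) :
    HasDerivAt (fun y => tan y ^ a * sec y ^ (b + 1))
      (a * tan x ^ (a - 1) * sec x ^ (b + 3) + (b + 1) * tan x ^ (a + 1) * sec x ^ (b + 1)) x := by
  refine (((hasDerivAt_tan_sec_sq hx).fun_pow a).fun_mul
    ((hasDerivAt_sec hx).fun_pow (b + 1))).congr_deriv ?_
  simp only [add_tsub_cancel_right]
  push_cast
  ring

lemma L_congr {f g : ℝ → ℝ} {x : ℝ} (h : f =ᶠ[𝓝 x] g) : L f x = L g x :=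
  Filter.EventuallyEq.deriv_eq (h.mono fun y hy => by simp only [hy])

lemma iterate_L_tan_eq_sum_range (n : ℕ) {x : ℝ} (hx : cos x ≠ 0) :
    L^[n] tan x =
      ∑ k ∈ range (n + 2), (N n k : ℝ) * (tan x ^ (n + 1 - 2 * k) * sec x ^ (n + 2 * k)) := by
  induction n generalizing x with
  | zero => simp [N]
  | succ n ih =>
    have hsec_mul : (fun y => sec y *
          ∑ k ∈ range (n + 2), (N n k : ℝ) * (tan y ^ (n + 1 - 2 * k) * sec y ^ (n + 2 * k))) =
        fun y => ∑ k ∈ range (n + 2),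
          (N n k : ℝ) * (tan y ^ (n + 1 - 2 * k) * sec y ^ (n + 2 * k + 1)) := by
      funext y
      rw [mul_sum]
      exact sum_congr rfl fun k _ => by ring
    have hderiv := HasDerivAt.fun_sum fun k (_ : k ∈ range (n + 2)) =>
      (hasDerivAt_tan_pow_mul_sec_pow_succ hx (n + 1 - 2 * k) (n + 2 * k)).const_mul (N n k : ℝ)
    calc L^[n + 1] tan x
        = L (fun y => ∑ k ∈ range (n + 2),
            (N n k : ℝ) * (tan y ^ (n + 1 - 2 * k) * sec y ^ (n + 2 * k))) x := by
          rw [Function.iterate_succ_apply']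
          exact L_congr ((continuous_cos.continuousAt.eventually_ne hx).mono fun y hy => ih hy)
      _ = ∑ k ∈ range (n + 2), (N n k : ℝ) *
            (((n + 1 - 2 * k : ℕ) : ℝ) * tan x ^ (n + 1 - 2 * k - 1) * sec x ^ (n + 2 * k + 3) +
              ((n + 2 * k : ℕ) + 1) * tan x ^ (n + 1 - 2 * k + 1) * sec x ^ (n + 2 * k + 1)) := by
          rw [L, hsec_mul]; exact hderiv.deriv
      _ = ∑ k ∈ range (n + 3),
            (N (n + 1) k : ℝ) * (tan x ^ (n + 1 + 1 - 2 * k) * sec x ^ (n + 1 + 2 * k)) := by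
          rw [sum_range_N_succ_mul]
          refine sum_congr rfl fun k _ => ?_
          rcases le_or_gt (2 * k) (n + 1) with hk | hk
          · rw [Nat.cast_sub hk, show n + 1 - 2 * k - 1 = n + 1 + 1 - 2 * (k + 1) by omega,
              show n + 1 - 2 * k + 1 = n + 1 + 1 - 2 * k by omega]
            push_cast
            ring
          · rw [N_eq_zero_of_lt n (by omega), Int.cast_zero, zero_mul, zero_mul]

theorem iterate_L_tan (n : ℕ) (x : ℝ) (hx : Real.cos x ≠ 0) :
    L^[n] Real.tan x =
      ∑ k ∈ Finset.range ((n + 1) / 2 + 1),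
        (N n k : ℝ) * Real.tan x ^ (n + 1 - 2 * k) * sec x ^ (n + 2 * k) := by
  simp only [mul_assoc]
  rw [iterate_L_tan_eq_sum_range n hx, sum_range_N_mul_of_le n _ (by omega)]
end

section
/- Define integers N(n,k) for n, k ≥ 0 by N(0,0) = 1, N(0,k) = 0 for k ≥ 1, N(n,k) = 0 for k < 0, and the recurrence N(n+1,k) = (n+2k+1)·N(n,k) + (n−2k+3)·N(n,k−1). Then for all n ≥ 0 and 0 ≤ k ≤ ⌊(n+1)/2⌋, N(n,k) = n! · C(n+1, 2k). -/
/-! Induction on `n`: after substituting the formula, the recurrence becomes a linear identity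
between `C(m+1, 2j)`, `C(m+1, 2j+1)` and `C(m+1, 2j+2)`, which follows from Pascal's rule and
`(k+1) C(n, k+1) = (n-k) C(n, k)`. -/

open Nat

lemma N_of_neg (n : ℕ) {k : ℤ} (hk : k < 0) : N n k = 0 := by
  induction n generalizing k with
  | zero => simp [N, hk.ne]
  | succ m ih => simp [N, ih hk, ih (show k - 1 < 0 by omega)]

lemma Nat.cast_choose_succ_mul {R : Type*} [CommRing R] (n k : ℕ) :
    (n.choose (k + 1) : R) * (k + 1) = n.choose k * (n - k) := by
  rcases le_or_gt k n with hkn | hnk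
  · simpa [Nat.cast_sub hkn] using congrArg (Nat.cast (R := R)) (choose_succ_right_eq n k)
  · simp [choose_eq_zero_of_lt hnk, choose_eq_zero_of_lt (hnk.trans (lt_succ_self k))]

lemma choose_even_recurrence (m j : ℕ) :
    ((m : ℤ) + 2 * j + 3) * (m + 1).choose (2 * j + 2)
      + ((m : ℤ) - 2 * j + 1) * (m + 1).choose (2 * j)
      = (m + 1) * (m + 2).choose (2 * j + 2) := by
  have hodd := Nat.cast_choose_succ_mul (R := ℤ) (m + 1) (2 * j)
  have heven := Nat.cast_choose_succ_mul (R := ℤ) (m + 1) (2 * j + 1)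
  have hpascal : ((m + 2).choose (2 * j + 2) : ℤ)
      = (m + 1).choose (2 * j + 1) + (m + 1).choose (2 * j + 2) := by
    exact_mod_cast choose_succ_succ' (m + 1) (2 * j + 1)
  push_cast at hodd heven
  rw [hpascal]
  linear_combination heven - hodd

lemma N_natCast (n k : ℕ) : N n k = (n ! : ℤ) * (n + 1).choose (2 * k) := by
  induction n generalizing k with
  | zero =>
    cases k with
    | zero => simp [N]
    | succ j => simp [N, choose_eq_zero_of_lt (show 1 < 2 * (j + 1) by omega)]; omega
  | succ m ih =>
    cases k with
    | zero =>
      have h0 : N m 0 = m ! := by simpa using ih 0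
      simp [N, h0, N_of_neg m (show (-1 : ℤ) < 0 by norm_num), factorial_succ]
    | succ j =>
      rw [N, show ((j + 1 : ℕ) : ℤ) - 1 = j by push_cast; ring, ih (j + 1), ih j,
        factorial_succ, show 2 * (j + 1) = 2 * j + 2 by ring]
      push_cast
      linear_combination (m ! : ℤ) * choose_even_recurrence m j

theorem N_eq_factorial_choose_general (n k : ℕ) :
    N n k = (n.factorial : ℤ) * ((n + 1).choose (2 * k)) :=
  N_natCast n k

theorem N_eq_factorial_choose (n k : ℕ) (hk : k ≤ (n + 1) / 2) :
    N n k = (n.factorial : ℤ) * ((n + 1).choose (2 * k)) :=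
  N_eq_factorial_choose_general n k
end

section
/- Let L be the operator sending a function f to the derivative of (sec·f), i.e. L(f)(x) = d/dx (sec(x)·f(x)). Then for every natural number m ≥ 0 and every real x with cos(x) ≠ 0, L^{2m+1}(sec)(x) = (2m+1)! · ∑_{k=0}^{m} C(2m+2, 2k+1) · tan(x)^{2m−2k+1} · (1 + tan(x)^2)^{m+1+k}. -/
/-!
Put `u = (1 - sin)⁻¹` and `v = (1 + sin)⁻¹`. Then `u' = cos u²`, `v' = -cos v²` and
`sec = cos (u + v) / 2`, so by induction `Lⁿ sec = n!/2 · cos · (uⁿ⁺¹ + (-1)ⁿ vⁿ⁺¹)`.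
As `cos u = sec + tan` and `cos v = sec - tan`, for `n = 2m + 1` this is
`n!/2 · secⁿ · ((sec + tan)²ᵐ⁺² - (sec - tan)²ᵐ⁺²)`; the binomial theorem keeps only
the odd powers of `tan`, and `sec² = 1 + tan²` gives the stated form.
-/

open Real Finset Filter Topology
open scoped Nat

theorem HasDerivAt.inv_pow_succ {𝕜 : Type*} [NontriviallyNormedField 𝕜] {f : 𝕜 → 𝕜}
    {f' x : 𝕜} (hf : HasDerivAt f f' x) (hx : f x ≠ 0) (n : ℕ) :
    HasDerivAt (fun y => (f y)⁻¹ ^ (n + 1)) (-((n + 1) * f' * (f x)⁻¹ ^ (n + 2))) x := by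
  refine ((hf.inv hx).pow (n + 1)).congr_deriv ?_
  rw [Pi.inv_apply, pow_add, inv_pow (f x) 2, div_eq_mul_inv]
  push_cast
  ring

theorem sum_range_two_mul {M : Type*} [AddCommMonoid M] (f : ℕ → M) (n : ℕ) :
    ∑ j ∈ range (2 * n), f j = ∑ k ∈ range n, (f (2 * k) + f (2 * k + 1)) := by
  induction n with
  | zero => simp
  | succ n ih =>
    rw [mul_add, mul_one, sum_range_succ, sum_range_succ, sum_range_succ, ih, add_assoc]

theorem add_pow_two_mul_sub_sub_pow_two_mul {R : Type*} [CommRing R] (a b : R) (n : ℕ) :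
    (a + b) ^ (2 * n) - (a - b) ^ (2 * n) =
      2 * ∑ k ∈ range n,
        ((2 * n).choose (2 * k + 1) : R) * a ^ (2 * k + 1) * b ^ (2 * n - (2 * k + 1)) := by
  rw [sub_eq_add_neg a b, add_pow, add_pow, ← sum_sub_distrib, sum_range_succ, sum_range_two_mul,
    mul_sum, Nat.sub_self, pow_zero, pow_zero, sub_self, add_zero]
  refine sum_congr rfl fun k hk => ?_
  have hkn : k < n := mem_range.mp hk
  have heven : Even (2 * n - 2 * k) := ⟨n - k, by omega⟩
  have hodd : Odd (2 * n - (2 * k + 1)) := ⟨n - k - 1, by omega⟩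
  rw [heven.neg_pow, hodd.neg_pow]
  ring

theorem one_sub_sin_mul_one_add_sin (x : ℝ) : (1 - sin x) * (1 + sin x) = cos x ^ 2 := by
  rw [cos_sq']
  ring

theorem one_sub_sin_ne_zero {x : ℝ} (hx : cos x ≠ 0) : 1 - sin x ≠ 0 :=
  left_ne_zero_of_mul (one_sub_sin_mul_one_add_sin x ▸ pow_ne_zero 2 hx)

theorem one_add_sin_ne_zero {x : ℝ} (hx : cos x ≠ 0) : 1 + sin x ≠ 0 :=
  right_ne_zero_of_mul (one_sub_sin_mul_one_add_sin x ▸ pow_ne_zero 2 hx)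

theorem sec_add_tan {x : ℝ} (hx : cos x ≠ 0) : sec x + tan x = cos x * (1 - sin x)⁻¹ := by
  have := one_sub_sin_ne_zero hx
  rw [sec, tan_eq_sin_div_cos]
  field_simp
  linear_combination one_sub_sin_mul_one_add_sin x

theorem sec_sub_tan {x : ℝ} (hx : cos x ≠ 0) : sec x - tan x = cos x * (1 + sin x)⁻¹ := by
  have := one_add_sin_ne_zero hx
  rw [sec, tan_eq_sin_div_cos]
  field_simp
  linear_combination one_sub_sin_mul_one_add_sin x

theorem iterate_L_sec_eq (n : ℕ) {x : ℝ} (hx : cos x ≠ 0) :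
    L^[n] sec x =
      n ! / 2 * cos x * ((1 - sin x)⁻¹ ^ (n + 1) + (-1) ^ n * (1 + sin x)⁻¹ ^ (n + 1)) := by
  induction n generalizing x with
  | zero =>
    have := one_sub_sin_ne_zero hx
    have := one_add_sin_ne_zero hx
    simp only [Function.iterate_zero_apply, sec, Nat.factorial_zero, Nat.cast_one, zero_add,
      pow_one, pow_zero, one_mul]
    field_simp
    linear_combination 2 * one_sub_sin_mul_one_add_sin x
  | succ n ih =>
    have hsec_mul : (fun y => sec y * L^[n] sec y) =ᶠ[𝓝 x] fun y =>
        n ! / 2 * ((1 - sin y)⁻¹ ^ (n + 1) + (-1) ^ n * (1 + sin y)⁻¹ ^ (n + 1)) := by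
      filter_upwards [continuous_cos.continuousAt.eventually_ne hx] with y hy
      rw [ih hy, sec]
      field_simp
    have hderiv : HasDerivAt (fun y =>
        n ! / 2 * ((1 - sin y)⁻¹ ^ (n + 1) + (-1) ^ n * (1 + sin y)⁻¹ ^ (n + 1))) _ x :=
      ((((hasDerivAt_sin x).const_sub 1).inv_pow_succ (one_sub_sin_ne_zero hx) n).add
        ((((hasDerivAt_sin x).const_add 1).inv_pow_succ (one_add_sin_ne_zero hx) n).const_mul
          ((-1) ^ n))).const_mul ((n ! : ℝ) / 2)
    rw [Function.iterate_succ_apply', L, hsec_mul.deriv_eq, hderiv.deriv, Nat.factorial_succ]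
    push_cast
    ring

theorem iterate_L_sec_eq_sec_tan (n : ℕ) {x : ℝ} (hx : cos x ≠ 0) :
    L^[n] sec x =
      n ! / 2 * sec x ^ n * ((sec x + tan x) ^ (n + 1) + (-1) ^ n * (sec x - tan x) ^ (n + 1)) := by
  have hcancel : (cos x)⁻¹ ^ n * cos x ^ (n + 1) = cos x := by
    rw [pow_succ, ← mul_assoc, ← mul_pow, inv_mul_cancel₀ hx, one_pow, one_mul]
  rw [iterate_L_sec_eq n hx, sec_add_tan hx, sec_sub_tan hx, sec, mul_pow, mul_pow]
  linear_combination
    -(n ! / 2 * ((1 - sin x)⁻¹ ^ (n + 1) + (-1) ^ n * (1 + sin x)⁻¹ ^ (n + 1))) * hcancel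

theorem sec_sq {x : ℝ} (hx : cos x ≠ 0) : sec x ^ 2 = 1 + tan x ^ 2 := by
  rw [sec, tan_eq_sin_div_cos]
  field_simp
  linear_combination -sin_sq_add_cos_sq x

theorem iterate_L_sec_odd (m : ℕ) (x : ℝ) (hx : Real.cos x ≠ 0) :
    L^[2 * m + 1] sec x =
      ((2 * m + 1).factorial : ℝ) *
        ∑ k ∈ Finset.range (m + 1),
          ((2 * m + 2).choose (2 * k + 1)) *
            Real.tan x ^ (2 * m + 1 - 2 * k) * (1 + Real.tan x ^ 2) ^ (m + 1 + k) := by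
  rw [iterate_L_sec_eq_sec_tan _ hx, (odd_two_mul_add_one m).neg_one_pow, neg_one_mul,
    ← sub_eq_add_neg, show 2 * m + 1 + 1 = 2 * (m + 1) by ring,
    add_pow_two_mul_sub_sub_pow_two_mul, mul_sum, mul_sum, mul_sum]
  refine sum_congr rfl fun k hk => ?_
  have hkm : k ≤ m := Nat.lt_succ_iff.mp (mem_range.mp hk)
  rw [← sec_sq hx, ← pow_mul, show 2 * (m + 1) - (2 * k + 1) = 2 * m + 1 - 2 * k by omega,
    show 2 * (m + 1 + k) = (2 * m + 1) + (2 * k + 1) by ring, pow_add]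
  ring
end
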